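/- The cubic Hamiltonian graph G_12 on 12 vertices, obtained from the 12-cycle v_1...v_12 by adding edges v_12 v_5, v_1 v_10, v_11 v_9, v_2 v_8, v_3 v_7, v_4 v_6, is asymmetric. -/

import Mathlib

/-!
Every automorphism preserves the two triangles `v₄v₅v₆` and `v₉v₁₀v₁₁`, hence the number
of triangle vertices in the closed neighbourhood of each vertex. This number singles out
`v₂` (no triangle vertex) and `v₁₂` (two). From then on, a vertex is fixed as soon as it is
the only vertex with its number and its adjacencies to the vertices already fixed; this
fixes `v₁, v₇`, then `v₆, v₁₀`, then `v₄, v₅, v₉, v₁₁`, and finally `v₃, v₈`.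
-/

/-- The cubic Hamiltonian graph `G₁₂` on 12 vertices (vertex `v_i` is the element of
`Fin 12` with value `i - 1`): the 12-cycle `v_1 ⋯ v_12 v_1` together with the chords
`v_12 v_5`, `v_1 v_10`, `v_11 v_9`, `v_2 v_8`, `v_3 v_7`, `v_4 v_6`. -/
def G12 : SimpleGraph (Fin 12) :=
  SimpleGraph.fromRel (fun a b =>
    (b.val = a.val + 1) ∨ (a = 11 ∧ b = 0) ∨
    (a = 11 ∧ b = 4) ∨ (a = 0 ∧ b = 9) ∨ (a = 10 ∧ b = 8) ∨
    (a = 1 ∧ b = 7) ∨ (a = 2 ∧ b = 6) ∨ (a = 3 ∧ b = 5))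

open Finset

namespace SimpleGraph

variable {V W α : Type*} {G : SimpleGraph V} {H : SimpleGraph W}

def InTriangle (G : SimpleGraph V) (v : V) : Prop :=
  ∃ a b, G.Adj v a ∧ G.Adj v b ∧ G.Adj a b

theorem Iso.inTriangle_iff (φ : G ≃g H) {v : V} : H.InTriangle (φ v) ↔ G.InTriangle v := by
  constructor
  · rintro ⟨a, b, ha, hb, hab⟩
    refine ⟨φ.symm a, φ.symm b, ?_, ?_, ?_⟩ <;> simpa [← φ.map_adj_iff]
  · rintro ⟨a, b, ha, hb, hab⟩
    exact ⟨φ a, φ b, φ.map_adj_iff.2 ha, φ.map_adj_iff.2 hb, φ.map_adj_iff.2 hab⟩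

def IsPinned (G : SimpleGraph V) (c : V → α) (S : Finset V) (w : V) : Prop :=
  ∀ u, c u = c w → (∀ s ∈ S, G.Adj u s ↔ G.Adj w s) → u = w

theorem Iso.apply_eq_self_of_isPinned {c : V → α} {S : Finset V} {w : V} (φ : G ≃g G)
    (hc : ∀ v, c (φ v) = c v) (hS : ∀ s ∈ S, φ s = s) (hw : G.IsPinned c S w) : φ w = w :=
  hw _ (hc w) fun s hs => by
    conv_lhs => rw [← hS s hs]
    exact φ.map_adj_iff

theorem Iso.forall_apply_eq_self_of_isPinned {c : V → α} {S T : Finset V} (φ : G ≃g G)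
    (hc : ∀ v, c (φ v) = c v) (hS : ∀ s ∈ S, φ s = s)
    (hT : ∀ t ∈ T, t ∈ S ∨ G.IsPinned c S t) : ∀ t ∈ T, φ t = t := fun t ht =>
  (hT t ht).elim (hS t) (φ.apply_eq_self_of_isPinned hc hS)

section Fintype

variable [Fintype V] [DecidableEq V] [DecidableRel G.Adj]

instance : DecidablePred G.InTriangle := fun v =>
  inferInstanceAs (Decidable (∃ a b, G.Adj v a ∧ G.Adj v b ∧ G.Adj a b))

instance [DecidableEq α] {c : V → α} {S : Finset V} : DecidablePred (G.IsPinned c S) := fun w =>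
  inferInstanceAs (Decidable (∀ u, c u = c w → (∀ s ∈ S, G.Adj u s ↔ G.Adj w s) → u = w))

variable (G) in
def closedTriangleDegree (v : V) : ℕ :=
  #{u | (v = u ∨ G.Adj v u) ∧ G.InTriangle u}

theorem Iso.closedTriangleDegree_apply [Fintype W] [DecidableEq W] [DecidableRel H.Adj]
    (φ : G ≃g H) (v : V) : H.closedTriangleDegree (φ v) = G.closedTriangleDegree v :=
  (card_equiv φ.toEquiv fun u => by simp [φ.inTriangle_iff, φ.map_adj_iff]).symm

end Fintype

end SimpleGraph

instance : DecidableRel G12.Adj := inferInstanceAs (DecidableRel (SimpleGraph.fromRel _).Adj)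

/-- The cubic Hamiltonian graph `G₁₂` on 12 vertices is asymmetric. -/
theorem G12_asymmetric : ∀ φ : G12 ≃g G12, ∀ v, φ v = v := by
  intro φ
  have hc := φ.closedTriangleDegree_apply
  have h₁ := φ.forall_apply_eq_self_of_isPinned hc (S := ∅) (T := {1, 11}) (by simp) (by decide)
  have h₂ := φ.forall_apply_eq_self_of_isPinned hc h₁ (T := {0, 1, 6, 11}) (by decide)
  have h₃ := φ.forall_apply_eq_self_of_isPinned hc h₂ (T := {0, 1, 5, 6, 9, 11}) (by decide)
  have h₄ := φ.forall_apply_eq_self_of_isPinned hc h₃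
    (T := {0, 1, 3, 4, 5, 6, 8, 9, 10, 11}) (by decide)
  have h₅ := φ.forall_apply_eq_self_of_isPinned hc h₄ (T := univ) (by decide)
  exact fun v => h₅ v (mem_univ v)
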